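/- Let (u, v, w) be a smooth solution of (KB) and (φ, ψ, θ) a smooth solution of the adjoint system (AKB) on ℝ². Define Cˣ = uₜφ + vₜψ + wₜθ − (1/4)uₓθₓₓ + (1/4)uₓₓθₓ and Cᵗ = −φuₓ − ψvₓ − θwₓ (subscripts denote partial derivatives). Then ∂ₓCˣ + ∂ₜCᵗ = 0 identically on ℝ². -/

import Mathlib

/-- Partial derivative with respect to the first (space) variable. -/
noncomputable def pdx (f : ℝ → ℝ → ℝ) (x t : ℝ) : ℝ := deriv (fun y => f y t) x

/-- Partial derivative with respect to the second (time) variable. -/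
noncomputable def pdt (f : ℝ → ℝ → ℝ) (x t : ℝ) : ℝ := deriv (fun s => f x s) t

/-- The three-field Kaup–Boussinesq system (KB) holds for `(u,v,w)` at the point `(x,t)`:
`∂ₜu = (3/2)u∂ₓu + ∂ₓv`, `∂ₜv = v∂ₓu + (1/2)u∂ₓv + ∂ₓw`,
`∂ₜw = −(1/4)∂ₓ³u + w∂ₓu + (1/2)u∂ₓw`. -/
def KBAt (u v w : ℝ → ℝ → ℝ) (x t : ℝ) : Prop :=
  pdt u x t = 3/2 * u x t * pdx u x t + pdx v x t ∧
  pdt v x t = v x t * pdx u x t + 1/2 * u x t * pdx v x t + pdx w x t ∧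
  pdt w x t = -(1/4) * pdx (pdx (pdx u)) x t + w x t * pdx u x t
    + 1/2 * u x t * pdx w x t

/-- `f : ℝ × ℝ → ℝ` (curried) is smooth in both variables jointly. -/
def Smooth2 (f : ℝ → ℝ → ℝ) : Prop := ContDiff ℝ (⊤ : ℕ∞) (fun p : ℝ × ℝ => f p.1 p.2)

/-- The adjoint system (AKB) of the three-field Kaup–Boussinesq system holds for
`(φ,ψ,θ)` (relative to the fields `(u,v,w)`) at the point `(x,t)`:
`∂ₜφ = (1/2)ψ∂ₓv + (1/2)θ∂ₓw + (3/2)u∂ₓφ + v∂ₓψ + w∂ₓθ − (1/4)∂ₓ³θ`,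
`∂ₜψ = ∂ₓφ + (1/2)u∂ₓψ − (1/2)ψ∂ₓu`,
`∂ₜθ = ∂ₓψ + (1/2)u∂ₓθ − (1/2)θ∂ₓu`. -/
def AKBAt (φ ψ θ u v w : ℝ → ℝ → ℝ) (x t : ℝ) : Prop :=
  pdt φ x t = 1/2 * ψ x t * pdx v x t + 1/2 * θ x t * pdx w x t
    + 3/2 * u x t * pdx φ x t + v x t * pdx ψ x t + w x t * pdx θ x t
    - 1/4 * pdx (pdx (pdx θ)) x t ∧
  pdt ψ x t = pdx φ x t + 1/2 * u x t * pdx ψ x t - 1/2 * ψ x t * pdx u x t ∧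
  pdt θ x t = pdx ψ x t + 1/2 * u x t * pdx θ x t - 1/2 * θ x t * pdx u x t


/-- The conserved current component `Cˣ` associated with the space-translation
symmetry `V2 = ∂ₓ` via Ibragimov's conservation theorem. -/
noncomputable def Cx2 (u v w φ ψ θ : ℝ → ℝ → ℝ) (x t : ℝ) : ℝ :=
  pdt u x t * φ x t + pdt v x t * ψ x t + pdt w x t * θ x t
    - 1/4 * pdx u x t * pdx (pdx θ) x t + 1/4 * pdx (pdx u) x t * pdx θ x t

/-- The conserved current component `Cᵗ` associated with `V2 = ∂ₓ`. -/
noncomputable def Ct2 (u v w φ ψ θ : ℝ → ℝ → ℝ) (x t : ℝ) : ℝ :=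
  -φ x t * pdx u x t - ψ x t * pdx v x t - θ x t * pdx w x t

section lems
variable {f : ℝ → ℝ → ℝ} (x t : ℝ)

lemma hx1 : HasDerivAt (fun y : ℝ => (y, t)) ((1:ℝ), (0:ℝ)) x :=
  HasDerivAt.prodMk (hasDerivAt_id x) (hasDerivAt_const x t)

lemma ht1 : HasDerivAt (fun s : ℝ => (x, s)) ((0:ℝ), (1:ℝ)) t :=
  HasDerivAt.prodMk (hasDerivAt_const t x) (hasDerivAt_id t)

lemma pdx_hasDeriv (hf : ContDiff ℝ (⊤ : ℕ∞) (fun p : ℝ × ℝ => f p.1 p.2)) : HasDerivAt (fun y => f y t)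
    (fderiv ℝ (fun p : ℝ × ℝ => f p.1 p.2) (x, t) (1, 0)) x :=
  by have := ((hf.differentiable (by simp) (x, t)).hasFDerivAt).comp_hasDerivAt x (hx1 x t); exact this

lemma pdt_hasDeriv (hf : ContDiff ℝ (⊤ : ℕ∞) (fun p : ℝ × ℝ => f p.1 p.2)) : HasDerivAt (fun s => f x s)
    (fderiv ℝ (fun p : ℝ × ℝ => f p.1 p.2) (x, t) (0, 1)) t :=
  ((hf.differentiable (by simp) (x, t)).hasFDerivAt).comp_hasDerivAt t (ht1 x t)

lemma pdx_eq (hf : ContDiff ℝ (⊤ : ℕ∞) (fun p : ℝ × ℝ => f p.1 p.2)) : pdx f x t = fderiv ℝ (fun p : ℝ × ℝ => f p.1 p.2) (x, t) (1, 0) :=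
  (pdx_hasDeriv x t hf).deriv

lemma pdt_eq (hf : ContDiff ℝ (⊤ : ℕ∞) (fun p : ℝ × ℝ => f p.1 p.2)) : pdt f x t = fderiv ℝ (fun p : ℝ × ℝ => f p.1 p.2) (x, t) (0, 1) :=
  (pdt_hasDeriv x t hf).deriv

lemma smooth_pdx (hf : ContDiff ℝ (⊤ : ℕ∞) (fun p : ℝ × ℝ => f p.1 p.2)) : Smooth2 (pdx f) := by
  have : (fun p : ℝ × ℝ => pdx f p.1 p.2)
      = fun p : ℝ × ℝ => fderiv ℝ (fun p : ℝ × ℝ => f p.1 p.2) p (1, 0) := by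
    funext p; exact pdx_eq p.1 p.2 hf
  rw [Smooth2, this]
  exact (hf.fderiv_right (by simp)).clm_apply contDiff_const

lemma smooth_pdt (hf : ContDiff ℝ (⊤ : ℕ∞) (fun p : ℝ × ℝ => f p.1 p.2)) : Smooth2 (pdt f) := by
  have : (fun p : ℝ × ℝ => pdt f p.1 p.2)
      = fun p : ℝ × ℝ => fderiv ℝ (fun p : ℝ × ℝ => f p.1 p.2) p (0, 1) := by
    funext p; exact pdt_eq p.1 p.2 hf
  rw [Smooth2, this]
  exact (hf.fderiv_right (by simp)).clm_apply contDiff_const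

lemma clairaut (hf : ContDiff ℝ (⊤ : ℕ∞) (fun p : ℝ × ℝ => f p.1 p.2)) : pdt (pdx f) x t = pdx (pdt f) x t := by
  set F := fun p : ℝ × ℝ => f p.1 p.2 with hF
  set G := fderiv ℝ F with hG
  have hGd : Differentiable ℝ G := (hf.fderiv_right (m := (⊤ : ℕ∞)) (by simp)).differentiable (by simp)
  have hsym := second_derivative_symmetric (f := F) (f' := G)
    (f'' := fderiv ℝ G (x, t)) (fun y => (hf.differentiable (by simp) y).hasFDerivAt)
    (hGd (x, t)).hasFDerivAt
  have h1 : pdt (pdx f) x t = fderiv ℝ G (x, t) (0, 1) (1, 0) := by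
    have hpx : (fun s => pdx f x s) = fun s => (ContinuousLinearMap.apply ℝ ℝ ((1:ℝ),(0:ℝ))) (G (x, s)) := by
      funext s; exact pdx_eq x s hf
    have : HasDerivAt (fun s => (ContinuousLinearMap.apply ℝ ℝ ((1:ℝ),(0:ℝ))) (G (x, s)))
        ((ContinuousLinearMap.apply ℝ ℝ ((1:ℝ),(0:ℝ))) (fderiv ℝ G (x, t) (0, 1))) t :=
      (ContinuousLinearMap.apply ℝ ℝ ((1:ℝ),(0:ℝ))).hasFDerivAt.comp_hasDerivAt t
        ((hGd (x, t)).hasFDerivAt.comp_hasDerivAt t (ht1 x t))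
    rw [pdt, hpx]
    exact this.deriv
  have h2 : pdx (pdt f) x t = fderiv ℝ G (x, t) (1, 0) (0, 1) := by
    have hpt : (fun y => pdt f y t) = fun y => (ContinuousLinearMap.apply ℝ ℝ ((0:ℝ),(1:ℝ))) (G (y, t)) := by
      funext y; exact pdt_eq y t hf
    have : HasDerivAt (fun y => (ContinuousLinearMap.apply ℝ ℝ ((0:ℝ),(1:ℝ))) (G (y, t)))
        ((ContinuousLinearMap.apply ℝ ℝ ((0:ℝ),(1:ℝ))) (fderiv ℝ G (x, t) (1, 0))) x :=
      (ContinuousLinearMap.apply ℝ ℝ ((0:ℝ),(1:ℝ))).hasFDerivAt.comp_hasDerivAt x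
        ((hGd (x, t)).hasFDerivAt.comp_hasDerivAt x (hx1 x t))
    rw [pdx, hpt]
    exact this.deriv
  rw [h1, h2, hsym]

lemma hpdx (hf : ContDiff ℝ (⊤ : ℕ∞) (fun p : ℝ × ℝ => f p.1 p.2)) : HasDerivAt (fun y => f y t) (pdx f x t) x := by
  rw [pdx_eq x t hf]; exact pdx_hasDeriv x t hf

lemma hpdt (hf : ContDiff ℝ (⊤ : ℕ∞) (fun p : ℝ × ℝ => f p.1 p.2)) : HasDerivAt (fun s => f x s) (pdt f x t) t := by
  rw [pdt_eq x t hf]; exact pdt_hasDeriv x t hf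

end lems

/-- `(Cˣ, Cᵗ)` is a conserved current: `∂ₓCˣ + ∂ₜCᵗ = 0` on ℝ². -/
theorem stmt_16 (u v w φ ψ θ : ℝ → ℝ → ℝ)
    (hu : Smooth2 u) (hv : Smooth2 v) (hw : Smooth2 w)
    (hφ : Smooth2 φ) (hψ : Smooth2 ψ) (hθ : Smooth2 θ)
    (hKB : ∀ x t : ℝ, KBAt u v w x t)
    (hAKB : ∀ x t : ℝ, AKBAt φ ψ θ u v w x t) :
    ∀ x t : ℝ, pdx (Cx2 u v w φ ψ θ) x t + pdt (Ct2 u v w φ ψ θ) x t = 0 := by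
  intro x t
  have su : ContDiff ℝ (⊤ : ℕ∞) (fun p : ℝ × ℝ => u p.1 p.2) := hu
  have sv : ContDiff ℝ (⊤ : ℕ∞) (fun p : ℝ × ℝ => v p.1 p.2) := hv
  have sw : ContDiff ℝ (⊤ : ℕ∞) (fun p : ℝ × ℝ => w p.1 p.2) := hw
  have sφ : ContDiff ℝ (⊤ : ℕ∞) (fun p : ℝ × ℝ => φ p.1 p.2) := hφ
  have sψ : ContDiff ℝ (⊤ : ℕ∞) (fun p : ℝ × ℝ => ψ p.1 p.2) := hψ
  have sθ : ContDiff ℝ (⊤ : ℕ∞) (fun p : ℝ × ℝ => θ p.1 p.2) := hθ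
  have sut : ContDiff ℝ (⊤ : ℕ∞) (fun p : ℝ × ℝ => pdt u p.1 p.2) := smooth_pdt su
  have svt : ContDiff ℝ (⊤ : ℕ∞) (fun p : ℝ × ℝ => pdt v p.1 p.2) := smooth_pdt sv
  have swt : ContDiff ℝ (⊤ : ℕ∞) (fun p : ℝ × ℝ => pdt w p.1 p.2) := smooth_pdt sw
  have sux : ContDiff ℝ (⊤ : ℕ∞) (fun p : ℝ × ℝ => pdx u p.1 p.2) := smooth_pdx su
  have svx : ContDiff ℝ (⊤ : ℕ∞) (fun p : ℝ × ℝ => pdx v p.1 p.2) := smooth_pdx sv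
  have swx : ContDiff ℝ (⊤ : ℕ∞) (fun p : ℝ × ℝ => pdx w p.1 p.2) := smooth_pdx sw
  have suxx : ContDiff ℝ (⊤ : ℕ∞) (fun p : ℝ × ℝ => pdx (pdx u) p.1 p.2) := smooth_pdx sux
  have sθx : ContDiff ℝ (⊤ : ℕ∞) (fun p : ℝ × ℝ => pdx θ p.1 p.2) := smooth_pdx sθ
  have sθxx : ContDiff ℝ (⊤ : ℕ∞) (fun p : ℝ × ℝ => pdx (pdx θ) p.1 p.2) := smooth_pdx sθx
  have Hx := (((((hpdx x t sut).mul (hpdx x t sφ)).add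
      ((hpdx x t svt).mul (hpdx x t sψ))).add
      ((hpdx x t swt).mul (hpdx x t sθ))).sub
      ((HasDerivAt.const_mul (1/4 : ℝ) (hpdx x t sux)).mul (hpdx x t sθxx))).add
      ((HasDerivAt.const_mul (1/4 : ℝ) (hpdx x t suxx)).mul (hpdx x t sθx))
  have Ht := ((((hpdt x t sφ).neg.mul (hpdt x t sux)).sub
      ((hpdt x t sψ).mul (hpdt x t svx))).sub
      ((hpdt x t sθ).mul (hpdt x t swx)))
  have e1 : pdx (Cx2 u v w φ ψ θ) x t = _ := Hx.deriv
  have e2 : pdt (Ct2 u v w φ ψ θ) x t = _ := Ht.deriv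
  rw [e1, e2]
  obtain ⟨k1, k2, k3⟩ := hKB x t
  obtain ⟨a1, a2, a3⟩ := hAKB x t
  have c1 := clairaut x t su
  have c2 := clairaut x t sv
  have c3 := clairaut x t sw
  rw [← c1, ← c2, ← c3, k1, k2, k3, a1, a2, a3]
  simp only [Pi.neg_apply]
  ring
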